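/- If f and g are balanced flows and their product fg is defined, then fg is balanced and its height is at most max(h(f), h(g)). -/

import Mathlib

/-!
Rename `f = u ⊸ v` and `g = t ⊸ w` apart, give each variable `x` the common height `ℓ x` of its
occurrences, and let `H` be the larger of the two heights and `θ` the MGU of `v` and `t`. Cut
each `θ x`, placed at height `ℓ x`, at height `H`, replacing what is cut off (and every variable)
by the variable named by the height at which it sits. As `v` and `t` have height at most `H` and
their variables sit at the heights `ℓ`, this substitution `τ` sends `v` and `t` to the
truncations of `vθ = tθ`; so it is a unifier, and `τ = ρ ∘ θ`. Likewise `uθρ` is the truncation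
of `uθ`, and `wθρ` that of `wθ`. Truncation only replaces subterms by variables, so `ρ` sends a
variable occurring at depth `n` in `uθ` or `wθ` to the variable `n`: the flow `uθ ⊸ wθ` is
balanced, and it is no higher than its truncation, whose height is at most `H`.
-/

/-- First-order terms over natural-number symbols: variables and applications. -/
inductive Tm : Type
  | var : ℕ → Tm
  | app : ℕ → List Tm → Tm

namespace Tm

/-- Apply a substitution (map from variables to terms) homomorphically. -/
def subst (σ : ℕ → Tm) : Tm → Tm
  | var x => σ x
  | app f ts => app f (ts.attach.map fun ⟨t, _⟩ => subst σ t)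

/-- List of variables occurring in a term. -/
def varsL : Tm → List ℕ
  | var x => [x]
  | app _ ts => ts.attach.flatMap fun ⟨t, _⟩ => varsL t

/-- Height of a term: maximal distance from the root to a subterm. -/
def height : Tm → ℕ
  | var _ => 0
  | app _ ts => (ts.attach.map fun ⟨t, _⟩ => height t + 1).foldr max 0

/-- Heights of the occurrences of the variable `x` in a term. -/
def occs (x : ℕ) : Tm → List ℕ
  | var y => if y = x then [0] else []
  | app _ ts => ts.attach.flatMap fun ⟨t, _⟩ => (occs x t).map (· + 1)

/-- Symbols occurring in a term, together with the arity they are used with. -/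
def symar : Tm → List (ℕ × ℕ)
  | var _ => []
  | app f ts => (f, ts.length) :: ts.attach.flatMap fun ⟨t, _⟩ => symar t

end Tm

open Tm

/-- Set of variables of a term. -/
def tvars (t : Tm) : Set ℕ := {x | x ∈ t.varsL}

/-- A term is closed when it has no variables. -/
def Closed (t : Tm) : Prop := t.varsL = []

/-- A substitution is finitary when it is the identity on all but finitely many variables. -/
def Finitary (σ : ℕ → Tm) : Prop := {x | σ x ≠ .var x}.Finite

/-- `σ` unifies `t` and `u`. -/
def Unifies (σ : ℕ → Tm) (t u : Tm) : Prop := subst σ t = subst σ u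

/-- `θ` is a most general unifier of `t` and `u`: a (finitary) unifier such that
any other finitary unifier factors as an instance of it. -/
def IsMGU (θ : ℕ → Tm) (t u : Tm) : Prop :=
  Finitary θ ∧ Unifies θ t u ∧
    ∀ σ, Finitary σ → Unifies σ t u → ∃ ρ, Finitary ρ ∧ ∀ x, σ x = subst ρ (θ x)

/-- Renaming of a term along a bijection of variables. -/
def rename (π : ℕ ≃ ℕ) (t : Tm) : Tm := subst (fun x => .var (π x)) t

/-- A flow is (the data of) a pair of terms `head ⊸ body`. -/
abbrev UFlow := Tm × Tm

/-- The flow condition: the variables of the head occur in the body. -/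
def IsFlow (f : UFlow) : Prop := tvars f.1 ⊆ tvars f.2

/-- Equality of flows up to (simultaneous, bijective) renaming of variables. -/
def FlowEquiv (f g : UFlow) : Prop :=
  ∃ π : ℕ ≃ ℕ, rename π f.1 = g.1 ∧ rename π f.2 = g.2

/-- Variables of a flow. -/
def flowVars (f : UFlow) : Set ℕ := tvars f.1 ∪ tvars f.2

/-- `h` is a product of the flows `f = u ⊸ v` and `g = t ⊸ w`: choosing representatives
with disjoint variables, `h = uθ ⊸ wθ` for `θ` a most general unifier of `v` and `t`. -/
def IsProd (f g h : UFlow) : Prop :=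
  ∃ f' g' θ, FlowEquiv f f' ∧ FlowEquiv g g' ∧ flowVars f' ∩ flowVars g' = ∅ ∧
    IsMGU θ f'.2 g'.1 ∧ h = (subst θ f'.1, subst θ g'.2)

/-- A wiring: a set of flows (finite sets of flows are considered up to renaming,
so we model them as sets of representatives). -/
abbrev Wiring := Set UFlow

/-- Product of wirings: pointwise product of flows, where defined. -/
def wmul (F G : Wiring) : Wiring := {h | ∃ f ∈ F, ∃ g ∈ G, IsProd f g h}

/-- The unit wiring `I = x ⊸ x`. -/
def wI : Wiring := {f | FlowEquiv (.var 0, .var 0) f}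

/-- Powers of a wiring. -/
def wpow (F : Wiring) : ℕ → Wiring
  | 0 => wI
  | n + 1 => wmul F (wpow F n)

/-- Equality of wirings up to renaming of each flow. -/
def WEq (F G : Wiring) : Prop :=
  (∀ f ∈ F, ∃ g ∈ G, FlowEquiv f g) ∧ ∀ g ∈ G, ∃ f ∈ F, FlowEquiv f g

/-- A fact: a flow of the form `t ⊸ t` with `t` closed. -/
def IsFact (f : UFlow) : Prop := Closed f.1 ∧ f.2 = f.1

/-- Application of a wiring to (the fact associated with) a closed term:
the set of product flows. -/
def appF (F : Wiring) (t : Tm) : Set UFlow := {h | ∃ f ∈ F, IsProd f (t, t) h}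

/-- Application of a wiring to a fact, keeping the facts produced. -/
def factApp (F : Wiring) (t : Tm) : Set Tm := {v | ∃ f ∈ F, IsProd f (t, t) (v, v)}

/-- A wiring is deterministic if it produces at most one fact from any fact. -/
def Deterministic (F : Wiring) : Prop := ∀ t, Closed t → (appF F t).Subsingleton

/-- Two terms are matchable if renamings of them with disjoint variables are unifiable. -/
def Matchable (t u : Tm) : Prop :=
  ∃ (π π' : ℕ ≃ ℕ), tvars (rename π t) ∩ tvars (rename π' u) = ∅ ∧
    ∃ θ, Finitary θ ∧ Unifies θ (rename π t) (rename π' u)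

/-- A flow is balanced if each variable has all its occurrences at the same height. -/
def BalancedF (f : UFlow) : Prop :=
  ∀ x, ∀ n ∈ occs x f.1 ++ occs x f.2, ∀ m ∈ occs x f.1 ++ occs x f.2, n = m

/-- Height of a flow. -/
def heightF (f : UFlow) : ℕ := max f.1.height f.2.height

/-- A wiring is balanced if all its flows are. -/
def BalancedW (F : Wiring) : Prop := ∀ f ∈ F, BalancedF f

/-- Height of a wiring: maximal height of its flows. -/
noncomputable def heightW (F : Wiring) : ℕ := sSup (heightF '' F)

/-- The computation space of a wiring `F`: closed terms (identified with the
corresponding facts) of height at most `heightW F` built using only symbols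
(with their arities) occurring in `F` and the constant `⋆` (symbol `0`). -/
noncomputable def compSpace (F : Wiring) : Set Tm :=
  {t | Closed t ∧ t.height ≤ heightW F ∧
    ∀ q ∈ t.symar, q = (0, 0) ∨ ∃ f ∈ F, q ∈ f.1.symar ++ f.2.symar}

/-- Nilpotency of a wiring: some power is the empty wiring. -/
def Nilpotent (F : Wiring) : Prop := ∃ n, 0 < n ∧ wpow F n = ∅

/-- Edges of the computation graph of `F`: from `u` to `v` iff `v ∈ F u`. -/
noncomputable def Edge (F : Wiring) (u v : Tm) : Prop :=
  u ∈ compSpace F ∧ v ∈ compSpace F ∧ v ∈ factApp F u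

/-- Acyclicity of the computation graph of `F`. -/
noncomputable def AcyclicCG (F : Wiring) : Prop :=
  ¬ ∃ n, 0 < n ∧ ∃ c : ℕ → Tm, (∀ i < n, Edge F (c i) (c (i + 1))) ∧ c n = c 0

namespace Tm

@[induction_eliminator]
theorem ind {motive : Tm → Prop} (var : ∀ x, motive (Tm.var x))
    (app : ∀ f ts, (∀ t ∈ ts, motive t) → motive (Tm.app f ts)) : ∀ t, motive t
  | .var x => var x
  | .app f ts => app f ts fun t _ => ind var app t

@[simp] theorem subst_var (σ : ℕ → Tm) (x : ℕ) : subst σ (var x) = σ x := by simp [subst]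

@[simp] theorem subst_app (σ : ℕ → Tm) (f : ℕ) (ts : List Tm) :
    subst σ (app f ts) = app f (ts.map (subst σ)) := by simp [subst]

@[simp] theorem varsL_var (x : ℕ) : varsL (var x) = [x] := by simp [varsL]

@[simp] theorem varsL_app (f : ℕ) (ts : List Tm) :
    varsL (app f ts) = ts.flatMap varsL := by simp [varsL]

@[simp] theorem occs_var (x y : ℕ) : occs x (var y) = if y = x then [0] else [] := by
  simp [occs]

@[simp] theorem occs_app (x f : ℕ) (ts : List Tm) :
    occs x (app f ts) = ts.flatMap fun t => (occs x t).map (· + 1) := by simp [occs]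

@[simp] theorem height_var (x : ℕ) : height (var x) = 0 := by simp [height]

@[simp] theorem height_app (f : ℕ) (ts : List Tm) :
    height (app f ts) = (ts.map fun t => height t + 1).foldr max 0 := by simp [height]

theorem height_app_le_iff {f n : ℕ} {ts : List Tm} :
    height (app f ts) ≤ n ↔ ∀ t ∈ ts, height t + 1 ≤ n := by
  rw [height_app]
  induction ts with
  | nil => simp
  | cons t ts ih => simp [ih]

theorem height_lt_height_app {f : ℕ} {ts : List Tm} {t : Tm} (ht : t ∈ ts) :
    height t < height (app f ts) :=
  height_app_le_iff.1 le_rfl t ht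

theorem subst_subst (σ τ : ℕ → Tm) (t : Tm) :
    subst τ (subst σ t) = subst (fun x => subst τ (σ x)) t := by
  induction t with
  | var x => simp
  | app f ts ih => simpa using List.map_congr_left ih

theorem height_le_height_subst (σ : ℕ → Tm) (t : Tm) : height t ≤ height (subst σ t) := by
  induction t with
  | var x => simp
  | app f ts ih =>
    rw [subst_app]
    exact height_app_le_iff.2 fun t ht =>
      (ih t ht).trans_lt (height_lt_height_app (List.mem_map_of_mem ht))

theorem height_subst_var (r : ℕ → ℕ) (t : Tm) :
    height (subst (fun x => var (r x)) t) = height t := by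
  induction t with
  | var x => simp
  | app f ts ih =>
    simp only [subst_app, height_app, List.map_map]
    congr 1
    exact List.map_congr_left fun t ht => by simp [ih t ht]

theorem height_rename (π : ℕ ≃ ℕ) (t : Tm) : height (rename π t) = height t :=
  height_subst_var π t

theorem mem_varsL_of_mem_occs {x n : ℕ} {t : Tm} (h : n ∈ occs x t) : x ∈ varsL t := by
  induction t generalizing n with
  | var y => by_cases hy : y = x <;> simp_all
  | app f ts ih =>
    simp only [occs_app, List.mem_flatMap, List.mem_map] at h
    obtain ⟨t, ht, k, hk, -⟩ := h
    simpa using ⟨t, ht, ih t ht hk⟩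

/-- `ℓ x` is the height of every occurrence of `x` in `t`, when `t` is placed at height `d`. -/
def Leveled (ℓ : ℕ → ℕ) (d : ℕ) (t : Tm) : Prop := ∀ x, ∀ k ∈ occs x t, ℓ x = d + k

section Leveled

variable {ℓ ℓ' : ℕ → ℕ} {d : ℕ}

@[simp] theorem leveled_var {x : ℕ} : Leveled ℓ d (var x) ↔ ℓ x = d := by
  simp [Leveled]

@[simp] theorem leveled_app {f : ℕ} {ts : List Tm} :
    Leveled ℓ d (app f ts) ↔ ∀ t ∈ ts, Leveled ℓ (d + 1) t := by
  simp only [Leveled, occs_app, List.mem_flatMap, List.mem_map]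
  constructor
  · intro h t ht x k hk
    rw [h x (k + 1) ⟨t, ht, k, hk, rfl⟩]
    omega
  · rintro h x _ ⟨t, ht, k, hk, rfl⟩
    rw [h t ht x k hk]
    omega

theorem Leveled.subst {σ : ℕ → Tm} {t : Tm} (ht : Leveled ℓ d t)
    (hσ : ∀ x, Leveled ℓ' (ℓ x) (σ x)) : Leveled ℓ' d (subst σ t) := by
  induction t generalizing d with
  | var x => rw [subst_var, ← leveled_var.1 ht]; exact hσ x
  | app f ts ih =>
    simp only [subst_app, leveled_app, List.mem_map, forall_exists_index, and_imp,
      forall_apply_eq_imp_iff₂] at ht ⊢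
    exact fun t hmem => ih t hmem (ht t hmem)

theorem Leveled.rename (π : ℕ ≃ ℕ) {t : Tm} (ht : Leveled ℓ d t) :
    Leveled (ℓ ∘ π.symm) d (_root_.rename π t) :=
  ht.subst fun x => by simp

theorem Leveled.congr {t : Tm} (h : ∀ x ∈ varsL t, ℓ x = ℓ' x) (ht : Leveled ℓ d t) :
    Leveled ℓ' d t :=
  fun x k hk => (h x (mem_varsL_of_mem_occs hk)).symm.trans (ht x k hk)

end Leveled

/-- Cuts a term placed at height `d` at height `H`: each variable, and each non-constant subterm
at height `k ≥ H`, is replaced by `var k`, `k` being the height at which it sits. Naming the new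
variables by their height is what makes every truncation balanced. -/
def trunc (H : ℕ) : ℕ → Tm → Tm
  | d, var _ => var d
  | d, app f ts =>
    if ts = [] ∨ d < H then app f (ts.attach.map fun ⟨t, _⟩ => trunc H (d + 1) t) else var d

section Trunc

variable {H d : ℕ}

@[simp] theorem trunc_var (x : ℕ) : trunc H d (var x) = var d := by simp [trunc]

theorem trunc_app (f : ℕ) (ts : List Tm) :
    trunc H d (app f ts) =
      if ts = [] ∨ d < H then app f (ts.map (trunc H (d + 1))) else var d := by
  simp [trunc]

theorem height_trunc_add_le (hd : d ≤ H) (t : Tm) : height (trunc H d t) + d ≤ H := by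
  induction t generalizing d with
  | var x => simpa
  | app f ts ih =>
    rw [trunc_app]
    split_ifs with h
    · rcases h with rfl | h
      · simpa
      · suffices height (app f (ts.map (trunc H (d + 1)))) ≤ H - d by omega
        refine height_app_le_iff.2 fun t ht => ?_
        obtain ⟨s, hs, rfl⟩ := List.mem_map.1 ht
        have := ih s hs (d := d + 1) h
        omega
    · simpa

theorem subst_eq_trunc_subst {ℓ : ℕ → ℕ} {τ θ : ℕ → Tm} (s : Tm)
    (hτ : ∀ x ∈ varsL s, τ x = trunc H (ℓ x) (θ x)) (hs : Leveled ℓ d s)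
    (hH : height s + d ≤ H) : subst τ s = trunc H d (subst θ s) := by
  induction s generalizing d with
  | var x => simpa [← leveled_var.1 hs] using hτ x
  | app f ts ih =>
    have hd : ts = [] ∨ d < H := by
      by_cases h : ts = []
      · exact .inl h
      · obtain ⟨t, ht⟩ := List.exists_mem_of_ne_nil ts h
        have := height_lt_height_app (f := f) ht
        omega
    rw [subst_app, subst_app, trunc_app, if_pos (by simpa using hd), List.map_map]
    congr 1
    refine List.map_congr_left fun t ht =>
      ih t ht (fun x hx => hτ x ?_) (leveled_app.1 hs t ht) ?_
    · simpa using ⟨t, ht, hx⟩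
    · have := height_lt_height_app (f := f) ht
      omega

theorem eq_var_of_subst_eq_trunc {ρ : ℕ → Tm} {s : Tm} (hs : subst ρ s = trunc H d s)
    {x n : ℕ} (hn : n ∈ occs x s) : ρ x = var (d + n) := by
  induction s generalizing d n with
  | var y =>
    obtain ⟨rfl, rfl⟩ : y = x ∧ n = 0 := by by_cases h : y = x <;> simp_all
    simpa using hs
  | app f ts ih =>
    simp only [occs_app, List.mem_flatMap, List.mem_map] at hn
    obtain ⟨t, ht, k, hk, rfl⟩ := hn
    rw [subst_app, trunc_app] at hs
    split_ifs at hs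
    simp only [app.injEq, List.map_inj_left] at hs
    rw [ih t ht (hs.2 t ht) hk]
    congr 1
    omega

theorem height_le_of_subst_eq_trunc {ρ : ℕ → Tm} {s : Tm} (hs : subst ρ s = trunc H 0 s) :
    height s ≤ H :=
  calc height s ≤ height (subst ρ s) := height_le_height_subst ρ s
    _ ≤ H := by simpa [hs] using height_trunc_add_le (Nat.zero_le H) s

end Trunc

end Tm

open Tm

theorem exists_subst_eq_trunc_of_isMGU {θ : ℕ → Tm} {v t : Tm} (hθ : IsMGU θ v t)
    {ℓ : ℕ → ℕ} {H : ℕ} {V : Set ℕ} (hV : V.Finite) (hvV : tvars v ⊆ V) (htV : tvars t ⊆ V)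
    (hv : Leveled ℓ 0 v) (ht : Leveled ℓ 0 t) (hvH : height v ≤ H) (htH : height t ≤ H) :
    ∃ ρ : ℕ → Tm, ∀ s, tvars s ⊆ V → Leveled ℓ 0 s → height s ≤ H →
      subst ρ (subst θ s) = trunc H 0 (subst θ s) := by
  classical
  set τ : ℕ → Tm := fun x => if x ∈ V then trunc H (ℓ x) (θ x) else var x
  have hτ : ∀ s, tvars s ⊆ V → Leveled ℓ 0 s → height s ≤ H →
      subst τ s = trunc H 0 (subst θ s) := fun s hsV hs hsH =>
    subst_eq_trunc_subst s (fun x hx => if_pos (hsV hx)) hs hsH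
  have hτfin : Finitary τ := hV.subset fun x hx => by_contra fun hxV => hx (if_neg hxV)
  have hτuni : Unifies τ v t := by
    rw [Unifies, hτ v hvV hv hvH, hτ t htV ht htH, hθ.2.1]
  obtain ⟨ρ, -, hρ⟩ := hθ.2.2 τ hτfin hτuni
  refine ⟨ρ, fun s hsV hs hsH => ?_⟩
  rw [subst_subst, ← funext hρ, hτ s hsV hs hsH]

theorem balancedF_of_subst_eq_trunc {ρ : ℕ → Tm} {H : ℕ} {f : UFlow}
    (h₁ : subst ρ f.1 = trunc H 0 f.1) (h₂ : subst ρ f.2 = trunc H 0 f.2) : BalancedF f := by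
  have key : ∀ x, ∀ n ∈ occs x f.1 ++ occs x f.2, ρ x = var n := by
    intro x n hn
    rcases List.mem_append.1 hn with hn | hn
    · simpa using eq_var_of_subst_eq_trunc h₁ hn
    · simpa using eq_var_of_subst_eq_trunc h₂ hn
  exact fun x n hn m hm => var.inj ((key x n hn).symm.trans (key x m hm))

def FlowLeveled (ℓ : ℕ → ℕ) (f : UFlow) : Prop := Leveled ℓ 0 f.1 ∧ Leveled ℓ 0 f.2

theorem BalancedF.exists_flowLeveled {f : UFlow} (hb : BalancedF f) :
    ∃ ℓ, FlowLeveled ℓ f := by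
  have hhead : ∀ x, ∀ k ∈ occs x f.1 ++ occs x f.2,
      (occs x f.1 ++ occs x f.2).headD 0 = 0 + k := by
    intro x k hk
    obtain ⟨a, l, hl⟩ := List.exists_cons_of_ne_nil (List.ne_nil_of_mem hk)
    simpa [hl] using hb x a (by simp [hl]) k hk
  exact ⟨fun x => (occs x f.1 ++ occs x f.2).headD 0,
    fun x k hk => hhead x k (List.mem_append_left _ hk),
    fun x k hk => hhead x k (List.mem_append_right _ hk)⟩

theorem exists_flowLeveled_of_flowEquiv {f f' : UFlow} (hf : ∃ ℓ, FlowLeveled ℓ f)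
    (he : FlowEquiv f f') : ∃ ℓ, FlowLeveled ℓ f' := by
  obtain ⟨ℓ, hf₁, hf₂⟩ := hf
  obtain ⟨π, h₁, h₂⟩ := he
  exact ⟨ℓ ∘ π.symm, h₁ ▸ hf₁.rename π, h₂ ▸ hf₂.rename π⟩

theorem FlowLeveled.congr {ℓ ℓ' : ℕ → ℕ} {f : UFlow} (h : ∀ x ∈ flowVars f, ℓ x = ℓ' x)
    (hf : FlowLeveled ℓ f) : FlowLeveled ℓ' f :=
  ⟨hf.1.congr fun x hx => h x (.inl hx), hf.2.congr fun x hx => h x (.inr hx)⟩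

theorem exists_flowLeveled_of_disjoint {f g : UFlow} (hdisj : flowVars f ∩ flowVars g = ∅)
    (hf : ∃ ℓ, FlowLeveled ℓ f) (hg : ∃ ℓ, FlowLeveled ℓ g) :
    ∃ ℓ, FlowLeveled ℓ f ∧ FlowLeveled ℓ g := by
  classical
  obtain ⟨ℓ₁, hf⟩ := hf
  obtain ⟨ℓ₂, hg⟩ := hg
  refine ⟨fun x => if x ∈ flowVars f then ℓ₁ x else ℓ₂ x,
    hf.congr fun x hx => (if_pos hx).symm, hg.congr fun x hx => (if_neg fun hx' => ?_).symm⟩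
  exact (Set.eq_empty_iff_forall_notMem.1 hdisj) x ⟨hx', hx⟩

theorem flowVars_finite (f : UFlow) : (flowVars f).Finite :=
  (List.finite_toSet _).union (List.finite_toSet _)

theorem heightF_of_flowEquiv {f f' : UFlow} (he : FlowEquiv f f') : heightF f' = heightF f := by
  obtain ⟨π, h₁, h₂⟩ := he
  rw [heightF, heightF, ← h₁, ← h₂, height_rename, height_rename]

theorem balanced_prod_general (f g h : UFlow)
    (hbf : BalancedF f) (hbg : BalancedF g) (hp : IsProd f g h) :
    BalancedF h ∧ heightF h ≤ max (heightF f) (heightF g) := by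
  obtain ⟨f', g', θ, hff', hgg', hdisj, hθ, rfl⟩ := hp
  obtain ⟨ℓ, ⟨hu, hv⟩, ⟨ht, hw⟩⟩ := exists_flowLeveled_of_disjoint hdisj
    (exists_flowLeveled_of_flowEquiv hbf.exists_flowLeveled hff')
    (exists_flowLeveled_of_flowEquiv hbg.exists_flowLeveled hgg')
  set H := max (heightF f) (heightF g)
  have hf'H : heightF f' ≤ H := (heightF_of_flowEquiv hff').trans_le (le_max_left _ _)
  have hg'H : heightF g' ≤ H := (heightF_of_flowEquiv hgg').trans_le (le_max_right _ _)
  obtain ⟨ρ, hρ⟩ :=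
    exists_subst_eq_trunc_of_isMGU hθ ((flowVars_finite f').union (flowVars_finite g'))
    (fun x hx => .inl (.inr hx)) (fun x hx => .inr (.inl hx)) hv ht
    ((le_max_right _ _).trans hf'H) ((le_max_left _ _).trans hg'H)
  have hρu := hρ f'.1 (fun x hx => .inl (.inl hx)) hu ((le_max_left _ _).trans hf'H)
  have hρw := hρ g'.2 (fun x hx => .inr (.inr hx)) hw ((le_max_right _ _).trans hg'H)
  exact ⟨balancedF_of_subst_eq_trunc hρu hρw,
    max_le (height_le_of_subst_eq_trunc hρu) (height_le_of_subst_eq_trunc hρw)⟩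

/-- the product of balanced flows, when defined, is balanced, of
height at most the maximum of the heights. -/
theorem balanced_prod (f g h : UFlow) (hf : IsFlow f) (hg : IsFlow g)
    (hbf : BalancedF f) (hbg : BalancedF g) (hp : IsProd f g h) :
    BalancedF h ∧ heightF h ≤ max (heightF f) (heightF g) :=
  balanced_prod_general f g h hbf hbg hp
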